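/- Let M = {(a,0) : a ≥ 1} ∪ {(0,a) : a ≥ 1} ∪ {(b,c) : 1 ≤ b ≤ c} (all rook, bishop and spider steps; the largest step set satisfying the slope condition for the Catalan boundary), let p_n be the number of Catalan M-paths from (0,0) to (n,n), and let P(t) = Σ_{n≥0} p_n tⁿ ∈ ℚ⟦t⟧. Then P satisfies the quadratic equation 2t(3t−2)·P(t)² − (3t² − t − 1)·P(t) + (t−1) = 0 in ℚ⟦t⟧. -/

import Mathlib

/-!
Split a Catalan path at its last step and record its endpoint `(k, k + h)` by the height `h`
above the diagonal. With `G_h = ∑ₖ c(k, k + h) tᵏ`, the last-step decomposition becomes a linear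
system in the `G_h` in which the height is a catalytic variable. Substituting for it the series
`Z = t (1 + G₀ + A₀)`, where `A_h` counts the paths ending on the row of `(k, k + h)` strictly to
its left, eliminates every unknown except `∑ₕ G_h Zʰ`; as this series is nonzero, `Z` is a root of
the kernel `(1 - t)(1 - Z)(Z - 2t) - (1 - t)(Z - t)Z - t(Z - t)`. The equation for `h = 0` reads
`(1 - t) Z = t (2 - 3t) G₀`, and eliminating `Z` gives the quadratic equation for `P = G₀`.
-/

/-- x-coordinate of the `j`-th node of the path `p` (partial sum of first coordinates). -/
def xPart (p : List (ℕ × ℕ)) (j : ℕ) : ℕ := ((p.take j).map Prod.fst).sum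

/-- y-coordinate of the `j`-th node of the path `p` (partial sum of second coordinates). -/
def yPart (p : List (ℕ × ℕ)) (j : ℕ) : ℕ := ((p.take j).map Prod.snd).sum

/-- `p` is an `S`-path from `(0,0)` to `(n,m)`. -/
def IsPath (S : Set (ℕ × ℕ)) (n m : ℕ) (p : List (ℕ × ℕ)) : Prop :=
  (∀ st ∈ p, st ∈ S) ∧ xPart p p.length = n ∧ yPart p p.length = m

/-- `p` is Catalan: every node `(x, y)` satisfies `x ≤ y`. -/
def IsCatalan (p : List (ℕ × ℕ)) : Prop :=
  ∀ j ≤ p.length, xPart p j ≤ yPart p j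

/-- The number of `S`-paths from `(0,0)` to `(n,m)`. -/
noncomputable def aCount (S : Set (ℕ × ℕ)) (n m : ℕ) : ℕ :=
  Set.ncard {p : List (ℕ × ℕ) | IsPath S n m p}

/-- The number of Catalan `S`-paths from `(0,0)` to `(n,n)`. -/
noncomputable def pCatalan (S : Set (ℕ × ℕ)) (n : ℕ) : ℕ :=
  Set.ncard {p : List (ℕ × ℕ) | IsPath S n n p ∧ IsCatalan p}

/-- The set of all rook, bishop and spider steps. -/
def MSteps : Set (ℕ × ℕ) :=
  {st | (∃ a : ℕ, 1 ≤ a ∧ st = (a, 0)) ∨ (∃ a : ℕ, 1 ≤ a ∧ st = (0, a)) ∨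
        (∃ b c : ℕ, 1 ≤ b ∧ b ≤ c ∧ st = (b, c))}

open Finset PowerSeries

section Paths

variable {S : Set (ℕ × ℕ)} {n m : ℕ} {p q : List (ℕ × ℕ)} {s : ℕ × ℕ}

lemma xPart_length (p : List (ℕ × ℕ)) : xPart p p.length = (p.map Prod.fst).sum := by
  rw [xPart, List.take_length]

lemma yPart_length (p : List (ℕ × ℕ)) : yPart p p.length = (p.map Prod.snd).sum := by
  rw [yPart, List.take_length]

lemma xPart_append_singleton_of_le {j : ℕ} (hj : j ≤ q.length) :
    xPart (q ++ [s]) j = xPart q j := by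
  rw [xPart, xPart, List.take_append_of_le_length hj]

lemma yPart_append_singleton_of_le {j : ℕ} (hj : j ≤ q.length) :
    yPart (q ++ [s]) j = yPart q j := by
  rw [yPart, yPart, List.take_append_of_le_length hj]

lemma isPath_append_singleton :
    IsPath S n m (q ++ [s]) ↔ IsPath S (n - s.1) (m - s.2) q ∧ s ∈ S ∧ s.1 ≤ n ∧ s.2 ≤ m := by
  simp only [IsPath, xPart_length, yPart_length, List.map_append, List.sum_append,
    List.map_cons, List.map_nil, List.sum_cons, List.sum_nil, List.forall_mem_append,
    List.forall_mem_singleton]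
  constructor
  · rintro ⟨⟨hq, hs⟩, hx, hy⟩
    exact ⟨⟨hq, by omega, by omega⟩, hs, by omega, by omega⟩
  · rintro ⟨⟨hq, hx, hy⟩, hs, h1, h2⟩
    exact ⟨⟨hq, hs⟩, by omega, by omega⟩

lemma isCatalan_append_singleton :
    IsCatalan (q ++ [s]) ↔ IsCatalan q ∧ xPart q q.length + s.1 ≤ yPart q q.length + s.2 := by
  have hlen : q.length + 1 = (q ++ [s]).length := by simp
  have hx : xPart (q ++ [s]) (q.length + 1) = xPart q q.length + s.1 := by
    rw [hlen, xPart_length, xPart_length]; simp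
  have hy : yPart (q ++ [s]) (q.length + 1) = yPart q q.length + s.2 := by
    rw [hlen, yPart_length, yPart_length]; simp
  refine ⟨fun h => ⟨fun j hj => ?_, hx ▸ hy ▸ h _ (by simp)⟩, fun ⟨hq, hend⟩ j hj => ?_⟩
  · rw [← xPart_append_singleton_of_le hj, ← yPart_append_singleton_of_le hj]
    exact h j (by simp; omega)
  · rcases (show j ≤ q.length ∨ j = q.length + 1 by simp at hj; omega) with hj | rfl
    · rw [xPart_append_singleton_of_le hj, yPart_append_singleton_of_le hj]
      exact hq j hj
    · rwa [hx, hy]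

lemma IsPath.le_of_mem (hp : IsPath S n m p) (hs : s ∈ p) : s.1 ≤ n ∧ s.2 ≤ m := by
  obtain ⟨-, hx, hy⟩ := hp
  rw [xPart_length] at hx
  rw [yPart_length] at hy
  exact ⟨hx ▸ List.le_sum_of_mem (List.mem_map_of_mem hs),
    hy ▸ List.le_sum_of_mem (List.mem_map_of_mem hs)⟩

lemma IsPath.length_le (hS : (0, 0) ∉ S) (hp : IsPath S n m p) : p.length ≤ n + m := by
  obtain ⟨hmem, hx, hy⟩ := hp
  have hpos : ∀ k ∈ p.map (fun s => s.1 + s.2), 1 ≤ k := by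
    simp only [List.mem_map]
    rintro _ ⟨s, hs, rfl⟩
    by_contra! h
    exact hS ((show s = (0, 0) by ext <;> simp <;> omega) ▸ hmem s hs)
  simpa [List.sum_map_add, ← xPart_length, ← yPart_length, hx, hy] using
    List.length_le_sum_of_one_le _ hpos

lemma isPath_finite (hS : (0, 0) ∉ S) (n m : ℕ) : {p | IsPath S n m p}.Finite := by
  let B : Finset (ℕ × ℕ) := range (n + 1) ×ˢ range (m + 1)
  refine ((List.finite_length_le B (n + m)).image (List.map Subtype.val)).subset fun p hp => ?_
  have hB : ∀ s ∈ p, s ∈ B := fun s hs => by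
    have := hp.le_of_mem hs
    simp only [B, mem_product, mem_range]
    omega
  exact ⟨p.attach.map fun s => ⟨s.1, hB s.1 s.2⟩, by simpa using hp.length_le hS,
    by simp [Function.comp_def, List.attach_map_subtype_val]⟩

def catalanPaths (S : Set (ℕ × ℕ)) (n m : ℕ) : Set (List (ℕ × ℕ)) :=
  {p | IsPath S n m p ∧ IsCatalan p}

noncomputable def catalanCount (S : Set (ℕ × ℕ)) (n m : ℕ) : ℕ := (catalanPaths S n m).ncard

lemma catalanPaths_finite (hS : (0, 0) ∉ S) (n m : ℕ) : (catalanPaths S n m).Finite :=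
  (isPath_finite hS n m).subset fun _ hp => hp.1

lemma append_singleton_mem_catalanPaths (hnm : n ≤ m) :
    q ++ [s] ∈ catalanPaths S n m ↔
      s ∈ S ∧ s.1 ≤ n ∧ s.2 ≤ m ∧ q ∈ catalanPaths S (n - s.1) (m - s.2) := by
  simp only [catalanPaths, Set.mem_ofPred_eq, isPath_append_singleton, isCatalan_append_singleton]
  constructor
  · rintro ⟨⟨hq, hs, h1, h2⟩, hcat, -⟩
    exact ⟨hs, h1, h2, hq, hcat⟩
  · rintro ⟨hs, h1, h2, hq, hcat⟩
    refine ⟨⟨hq, hs, h1, h2⟩, hcat, ?_⟩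
    rw [hq.2.1, hq.2.2]
    omega

lemma catalanCount_eq_zero_of_lt (h : m < n) : catalanCount S n m = 0 := by
  have hempty : catalanPaths S n m = ∅ := by
    refine Set.eq_empty_of_forall_notMem ?_
    rintro p ⟨⟨-, hx, hy⟩, hcat⟩
    exact absurd (hcat p.length le_rfl) (by omega)
  rw [catalanCount, hempty, Set.ncard_empty]

lemma catalanCount_zero_zero (hS : (0, 0) ∉ S) : catalanCount S 0 0 = 1 := by
  rw [catalanCount, Set.ncard_eq_one]
  refine ⟨[], Set.eq_singleton_iff_unique_mem.mpr ⟨⟨⟨by simp, rfl, rfl⟩, ?_⟩, fun p hp => ?_⟩⟩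
  · simp [IsCatalan, xPart, yPart]
  · obtain rfl | ⟨q, s, rfl⟩ := p.eq_nil_or_concat'
    · rfl
    obtain ⟨hs, h1, h2, -⟩ := (append_singleton_mem_catalanPaths le_rfl).mp hp
    exact absurd ((show s = (0, 0) by ext <;> simp <;> omega) ▸ hs) hS

lemma catalanCount_eq_sum (hS : (0, 0) ∉ S) (hnm : n ≤ m) (h0 : n ≠ 0 ∨ m ≠ 0)
    {T : Finset (ℕ × ℕ)} (hT : ∀ s, s ∈ T ↔ s ∈ S ∧ s.1 ≤ n ∧ s.2 ≤ m) :
    catalanCount S n m = ∑ s ∈ T, catalanCount S (n - s.1) (m - s.2) := by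
  classical
  have hfin (s : ℕ × ℕ) := catalanPaths_finite hS (n - s.1) (m - s.2)
  have hpaths : catalanPaths S n m =
      ↑(T.biUnion fun s => (hfin s).toFinset.image (· ++ [s])) := by
    ext p
    simp only [coe_biUnion, coe_image, Set.Finite.coe_toFinset, Set.mem_iUnion, Set.mem_image,
      mem_coe]
    obtain rfl | ⟨q, s, rfl⟩ := p.eq_nil_or_concat'
    · simp only [List.append_eq_nil_iff, List.cons_ne_nil, and_false, exists_false,
        iff_false]
      rintro ⟨⟨-, hx, hy⟩, -⟩
      simp [← hx, ← hy, xPart, yPart] at h0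
    · constructor
      · intro hp
        obtain ⟨hs, h1, h2, hq⟩ := (append_singleton_mem_catalanPaths hnm).mp hp
        exact ⟨s, (hT s).mpr ⟨hs, h1, h2⟩, q, hq, rfl⟩
      · rintro ⟨s', hs', q', hq', heq⟩
        obtain ⟨rfl, hss'⟩ := List.append_inj' heq rfl
        obtain rfl := List.singleton_inj.mp hss'
        obtain ⟨hs, h1, h2⟩ := (hT _).mp hs'
        exact (append_singleton_mem_catalanPaths hnm).mpr ⟨hs, h1, h2, hq'⟩
  rw [catalanCount, hpaths, Set.ncard_coe_finset, card_biUnion]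
  · refine sum_congr rfl fun s _ => ?_
    rw [card_image_of_injective _ (List.append_left_injective [s]), catalanCount,
      Set.ncard_eq_toFinset_card _ (hfin s)]
  · intro s _ s' _ hss'
    simp only [Function.onFun, disjoint_left, mem_image]
    rintro _ ⟨q, -, rfl⟩ ⟨q', -, heq⟩
    exact hss' (List.singleton_inj.mp (List.append_inj' heq rfl).2).symm

end Paths

lemma zero_notMem_MSteps : (0, 0) ∉ MSteps := by
  simp [MSteps]

def mStepsIn (n m : ℕ) : Finset (ℕ × ℕ) :=
  (Icc 1 n).map (.sectL ℕ 0) ∪ (Icc 1 m).map (.sectR 0 ℕ) ∪ {s ∈ Icc 1 n ×ˢ Icc 1 m | s.1 ≤ s.2}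

lemma mem_mStepsIn {n m : ℕ} {s : ℕ × ℕ} : s ∈ mStepsIn n m ↔ s ∈ MSteps ∧ s.1 ≤ n ∧ s.2 ≤ m := by
  obtain ⟨a, b⟩ := s
  simp [mStepsIn, MSteps]
  omega

lemma sum_mStepsIn {M : Type*} [AddCommMonoid M] (f : ℕ × ℕ → M) (n m : ℕ) :
    ∑ s ∈ mStepsIn n m, f s = ∑ a ∈ Icc 1 n, f (a, 0) + ∑ b ∈ Icc 1 m, f (0, b) +
      ∑ a ∈ Icc 1 n, ∑ b ∈ Icc a m, f (a, b) := by
  rw [mStepsIn, sum_union, sum_union, sum_map, sum_map,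
    sum_finset_product _ (Icc 1 n) (fun a => Icc a m) fun s => by
      simp only [mem_filter, mem_product, mem_Icc]; omega]
  · rfl
  all_goals simp [disjoint_left]; intros; omega

lemma sum_Icc_sub_eq_sum_range {M : Type*} [AddCommMonoid M] (f : ℕ → M) (a m : ℕ) :
    ∑ b ∈ Icc a m, f (m - b) = ∑ i ∈ range (m + 1 - a), f i := by
  rw [← Finset.Ico_add_one_right_eq_Icc, sum_Ico_reflect f a le_rfl, Nat.sub_self, range_eq_Ico]

lemma sum_range_catalanCount {S : Set (ℕ × ℕ)} (u v : ℕ) :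
    ∑ i ∈ range (u + v), catalanCount S u i = ∑ j ∈ range v, catalanCount S u (u + j) := by
  rw [sum_range_add, sum_eq_zero fun i hi => catalanCount_eq_zero_of_lt (mem_range.mp hi),
    zero_add]

/-- The last-step recurrence in diagonal coordinates `(k, k + h)`; the three sums count the
paths whose last step is horizontal, vertical, and a bishop or spider step. -/
lemma catalanCount_MSteps_add {k h : ℕ} (hkh : k ≠ 0 ∨ h ≠ 0) :
    catalanCount MSteps k (k + h) =
      ∑ i ∈ range k, catalanCount MSteps i (k + h) +
      ∑ j ∈ range h, catalanCount MSteps k (k + j) +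
      ∑ i ∈ range k, ∑ j ∈ range (h + 1), catalanCount MSteps i (i + j) := by
  rw [catalanCount_eq_sum zero_notMem_MSteps (by omega) (by omega) fun _ => mem_mStepsIn,
    sum_mStepsIn]
  simp only [Nat.sub_zero]
  have hspider : ∀ a ∈ Icc 1 k, ∑ b ∈ Icc a (k + h), catalanCount MSteps (k - a) (k + h - b) =
      ∑ j ∈ range (h + 1), catalanCount MSteps (k - a) (k - a + j) := fun a ha => by
    rw [sum_Icc_sub_eq_sum_range (catalanCount MSteps (k - a)), ← sum_range_catalanCount]
    congr 2
    simp at ha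
    omega
  rw [sum_congr rfl hspider,
    sum_Icc_sub_eq_sum_range (fun i => catalanCount MSteps i (k + h)),
    sum_Icc_sub_eq_sum_range (catalanCount MSteps k), Nat.add_sub_cancel, Nat.add_sub_cancel,
    sum_range_catalanCount,
    sum_Icc_sub_eq_sum_range (fun i => ∑ j ∈ range (h + 1), catalanCount MSteps i (i + j)),
    Nat.add_sub_cancel]

namespace PowerSeries

variable {R : Type*} [CommRing R]

lemma eq_of_forall_X_pow_dvd_sub {f g : R⟦X⟧} (h : ∀ N, X ^ N ∣ f - g) : f = g := by
  ext n
  simpa [sub_eq_zero] using X_pow_dvd_iff.mp (h (n + 1)) n n.lt_succ_self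

lemma coeff_X_mul_mk_one_mul (F : R⟦X⟧) (k : ℕ) :
    coeff k (X * mk 1 * F) = ∑ i ∈ range k, coeff i F := by
  cases k with
  | zero => simp [mul_assoc]
  | succ k =>
    rw [mul_assoc, coeff_succ_X_mul, coeff_mul, Nat.sum_antidiagonal_eq_sum_range_succ_mk]
    simp only [coeff_mk, Pi.one_apply, one_mul]
    exact sum_range_reflect (fun i => coeff i F) (k + 1)

/-- The substitution `u := Z` in `∑ₕ F h uʰ`; when `X ∣ Z` only the terms `h ≤ n` contribute to
the coefficient of `Xⁿ`. -/
noncomputable def evalCatalytic (Z : R⟦X⟧) (F : ℕ → R⟦X⟧) : R⟦X⟧ :=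
  mk fun n => ∑ h ∈ range (n + 1), coeff n (F h * Z ^ h)

variable {Z : R⟦X⟧}

lemma X_pow_dvd_evalCatalytic_sub (hZ : X ∣ Z) (F : ℕ → R⟦X⟧) (N : ℕ) :
    X ^ N ∣ evalCatalytic Z F - ∑ h ∈ range N, F h * Z ^ h := by
  refine X_pow_dvd_iff.mpr fun n hn => ?_
  rw [map_sub, evalCatalytic, coeff_mk, map_sum, sub_eq_zero]
  refine sum_subset (range_subset_range.mpr hn) fun h _ hh => ?_
  exact X_pow_dvd_iff.mp ((pow_dvd_pow_of_dvd hZ h).mul_left _) n (by simpa using hh)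

lemma eq_evalCatalytic (hZ : X ∣ Z) {E : R⟦X⟧} {F : ℕ → R⟦X⟧}
    (h : ∀ N, X ^ N ∣ E - ∑ h ∈ range N, F h * Z ^ h) : E = evalCatalytic Z F :=
  eq_of_forall_X_pow_dvd_sub fun N => by
    simpa using dvd_sub (h N) (X_pow_dvd_evalCatalytic_sub hZ F N)

lemma evalCatalytic_add (hZ : X ∣ Z) (F₁ F₂ : ℕ → R⟦X⟧) :
    evalCatalytic Z (F₁ + F₂) = evalCatalytic Z F₁ + evalCatalytic Z F₂ := by
  refine (eq_evalCatalytic hZ fun N => ?_).symm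
  simpa [add_mul, sum_add_distrib, add_sub_add_comm] using
    dvd_add (X_pow_dvd_evalCatalytic_sub hZ F₁ N) (X_pow_dvd_evalCatalytic_sub hZ F₂ N)

lemma evalCatalytic_mul_left (hZ : X ∣ Z) (C : R⟦X⟧) (F : ℕ → R⟦X⟧) :
    evalCatalytic Z (fun h => C * F h) = C * evalCatalytic Z F := by
  refine (eq_evalCatalytic hZ fun N => ?_).symm
  simpa [mul_sub, mul_sum, mul_assoc] using (X_pow_dvd_evalCatalytic_sub hZ F N).mul_left C

lemma evalCatalytic_single_zero : evalCatalytic Z (Pi.single 0 1) = 1 := by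
  ext n
  rw [evalCatalytic, coeff_mk, sum_eq_single 0 (fun h _ hh => by simp [hh]) (by simp)]
  simp

lemma mul_evalCatalytic_succ (hZ : X ∣ Z) (F : ℕ → R⟦X⟧) :
    Z * evalCatalytic Z (fun h => F (h + 1)) = evalCatalytic Z F - F 0 := by
  refine eq_sub_of_add_eq (eq_evalCatalytic hZ fun N => ?_)
  cases N with
  | zero => simp
  | succ N =>
    have key := mul_dvd_mul hZ (X_pow_dvd_evalCatalytic_sub hZ (fun h => F (h + 1)) N)
    rw [← pow_succ'] at key
    convert key using 1
    have hterm (h : ℕ) : Z * (F (h + 1) * Z ^ h) = F (h + 1) * Z ^ (h + 1) := by ring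
    rw [sum_range_succ', pow_zero, mul_one, mul_sub, mul_sum]
    simp only [hterm]
    ring

lemma constantCoeff_evalCatalytic (F : ℕ → R⟦X⟧) :
    constantCoeff (evalCatalytic Z F) = constantCoeff (F 0) := by
  rw [← coeff_zero_eq_constantCoeff_apply, ← coeff_zero_eq_constantCoeff_apply, evalCatalytic,
    coeff_mk]
  simp

end PowerSeries

namespace MSteps

noncomputable def heightGF (h : ℕ) : ℚ⟦X⟧ := mk fun k => (catalanCount MSteps k (k + h) : ℚ)

noncomputable def leftGF (h : ℕ) : ℚ⟦X⟧ :=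
  mk fun k => ∑ i ∈ range k, (catalanCount MSteps i (k + h) : ℚ)

noncomputable def belowGF (h : ℕ) : ℚ⟦X⟧ := ∑ j ∈ range h, heightGF j

lemma heightGF_eq : heightGF =
    Pi.single 0 1 + leftGF + belowGF + fun h => X * PowerSeries.mk 1 * belowGF (h + 1) := by
  funext h
  ext k
  simp only [Pi.add_apply, map_add, coeff_X_mul_mk_one_mul, heightGF, leftGF, belowGF, map_sum,
    coeff_mk]
  by_cases hkh : k = 0 ∧ h = 0
  · obtain ⟨rfl, rfl⟩ := hkh
    simp [catalanCount_zero_zero zero_notMem_MSteps]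
  · rw [catalanCount_MSteps_add (by tauto)]
    have hsingle : coeff k ((Pi.single 0 1 : ℕ → ℚ⟦X⟧) h) = 0 := by
      rcases eq_or_ne h 0 with rfl | hh
      · simp [coeff_one, show k ≠ 0 by tauto]
      · simp [hh]
    rw [hsingle]
    push_cast
    ring

lemma leftGF_eq (h : ℕ) : leftGF h = X * (heightGF (h + 1) + leftGF (h + 1)) := by
  ext k
  cases k with
  | zero => simp [leftGF]
  | succ k =>
    rw [coeff_succ_X_mul]
    simp only [leftGF, heightGF, map_add, coeff_mk, sum_range_succ, Nat.add_right_comm k 1 h,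
      Nat.add_assoc k h 1]
    ring

lemma belowGF_zero : belowGF 0 = 0 := sum_range_zero _

lemma belowGF_succ (h : ℕ) : belowGF (h + 1) = belowGF h + heightGF h := sum_range_succ _ _

/-- Chosen so that `Z - X = X * (heightGF 0 + leftGF 0)`, which makes the unknown `leftGF` drop
out of the substituted system. -/
noncomputable def catalyticValue : ℚ⟦X⟧ := X * (1 + heightGF 0 + leftGF 0)

lemma catalyticValue_def : catalyticValue = X * (1 + heightGF 0 + leftGF 0) := rfl

lemma X_dvd_catalyticValue : X ∣ catalyticValue := dvd_mul_right _ _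

local notation "Z" => catalyticValue

local notation "E" => evalCatalytic catalyticValue

lemma evalCatalytic_heightGF :
    E heightGF = 1 + E leftGF + E belowGF + X * PowerSeries.mk 1 * E fun h => belowGF (h + 1) := by
  conv_lhs => rw [heightGF_eq]
  rw [evalCatalytic_add X_dvd_catalyticValue, evalCatalytic_add X_dvd_catalyticValue,
    evalCatalytic_add X_dvd_catalyticValue, evalCatalytic_single_zero,
    evalCatalytic_mul_left X_dvd_catalyticValue]

lemma sub_X_mul_one_add_evalCatalytic_leftGF : (Z - X) * (1 + E leftGF) = X * E heightGF := by
  have hshift : E leftGF = X * E (fun h => heightGF (h + 1)) + X * E (fun h => leftGF (h + 1)) := by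
    conv_lhs => rw [funext leftGF_eq, evalCatalytic_mul_left X_dvd_catalyticValue]
    rw [← mul_add, ← evalCatalytic_add X_dvd_catalyticValue]
    rfl
  linear_combination Z * hshift + X * mul_evalCatalytic_succ X_dvd_catalyticValue heightGF +
    X * mul_evalCatalytic_succ X_dvd_catalyticValue leftGF + catalyticValue_def

lemma evalCatalytic_belowGF : E belowGF = Z * E fun h => belowGF (h + 1) := by
  rw [mul_evalCatalytic_succ X_dvd_catalyticValue, belowGF_zero, sub_zero]

lemma one_sub_mul_evalCatalytic_belowGF_succ :
    (1 - Z) * E (fun h => belowGF (h + 1)) = E heightGF := by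
  have hsucc : E (fun h => belowGF (h + 1)) = E belowGF + E heightGF := by
    rw [funext belowGF_succ, ← evalCatalytic_add X_dvd_catalyticValue]
    rfl
  linear_combination hsucc + evalCatalytic_belowGF

lemma one_sub_X_mul_catalyticValue : (1 - X) * Z = X * (2 - 3 * X) * heightGF 0 := by
  have h0 := congrFun heightGF_eq 0
  simp only [Pi.add_apply, Pi.single_eq_same, belowGF_zero, zero_add, add_zero,
    belowGF_succ] at h0
  linear_combination (1 - X) * catalyticValue_def - X * (1 - X) * h0
    - X ^ 2 * heightGF 0 * mk_one_mul_one_sub_eq_one ℚ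

lemma kernel_eq : (1 - X) * (1 - Z) * (Z - 2 * X) = (1 - X) * (Z - X) * Z + X * (Z - X) := by
  have hgeom : (1 - X) * (X * PowerSeries.mk 1) = (X : ℚ⟦X⟧) := by
    linear_combination X * mk_one_mul_one_sub_eq_one ℚ
  have hne : E heightGF ≠ 0 := fun h => by
    simpa [heightGF, catalanCount_zero_zero zero_notMem_MSteps] using
      (constantCoeff_evalCatalytic heightGF : constantCoeff (E heightGF) = _).symm.trans
        (congrArg constantCoeff h)
  refine sub_eq_zero.mp ((mul_eq_zero.mp ?_).resolve_left hne)
  -- clear the denominators `Z - X`, `1 - Z` and `1 - X` of the substituted system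
  linear_combination (1 - X) * (1 - Z) * (Z - X) * evalCatalytic_heightGF
    + (1 - X) * (1 - Z) * sub_X_mul_one_add_evalCatalytic_leftGF
    + (1 - X) * (1 - Z) * (Z - X) * evalCatalytic_belowGF
    + ((1 - X) * (Z - X) * Z + (Z - X) * X) * one_sub_mul_evalCatalytic_belowGF_succ
    + (Z - X) * (1 - Z) * (E fun h => belowGF (h + 1)) * hgeom

end MSteps

theorem stmt13 (P : PowerSeries ℚ)
    (hP : P = PowerSeries.mk fun n => (pCatalan MSteps n : ℚ)) :
    2 * PowerSeries.X * (3 * PowerSeries.X - 2) * P ^ 2 -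
      (3 * PowerSeries.X ^ 2 - PowerSeries.X - 1) * P + (PowerSeries.X - 1) = 0 := by
  obtain rfl : P = MSteps.heightGF 0 := hP
  have hX : (X : ℚ⟦X⟧) * (2 - 3 * X) ≠ 0 := by
    refine mul_ne_zero X_ne_zero fun h => ?_
    have h2 := congrArg constantCoeff h
    simp only [map_sub, map_mul, constantCoeff_X, mul_zero, sub_zero, map_ofNat] at h2
    norm_num at h2
  refine mul_left_cancel₀ hX ?_
  -- in `W = (1 - X) Z`, `(1 - X) * kernel` is `-2W² + (1 + X - 3X²)W - X(1 - X)(2 - 3X)`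
  linear_combination (1 - X) * MSteps.kernel_eq - (1 + X - 3 * X ^ 2 -
      2 * ((1 - X) * MSteps.catalyticValue + X * (2 - 3 * X) * MSteps.heightGF 0)) *
    MSteps.one_sub_X_mul_catalyticValue
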